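/- arXiv:1401.2127 — 6 statements merged into one kernel-verified Lean document; each statement's English description precedes it below -/
import Mathlib

section
/- For all θ with 0 < θ ≤ π/4, the function g(β) = (cos β − sin β)/(cos(θ/2 − β) − sin(θ/2 + β)) is decreasing in β for 0 ≤ β ≤ θ/2, so it is maximized at β = 0 where it equals 1/(cos(θ/2) − sin(θ/2)). -/
/-! The denominator factors as `(cos (θ/2) - sin (θ/2)) * (cos β - sin β)`, so on `[0, θ/2]`,
where `cos β - sin β > 0`, the function is constantly `1 / (cos (θ/2) - sin (θ/2))`. -/

open Real

lemma Real.cos_sub_sin_eq (x : ℝ) : cos x - sin x = √2 * cos (x + π / 4) := by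
  rw [cos_add, cos_pi_div_four, sin_pi_div_four]
  field_simp
  rw [sq_sqrt zero_le_two]

lemma Real.cos_sub_sin_pos {x : ℝ} (h₀ : -(3 * π / 4) < x) (h₁ : x < π / 4) :
    0 < cos x - sin x := by
  rw [cos_sub_sin_eq]
  exact mul_pos (by positivity) (cos_pos_of_mem_Ioo ⟨by linarith, by linarith⟩)

lemma Real.cos_sub_sub_sin_add (a b : ℝ) :
    cos (a - b) - sin (a + b) = (cos a - sin a) * (cos b - sin b) := by
  rw [cos_sub, sin_add]
  ring

lemma Real.cos_sub_sin_div_cos_sub_sub_sin_add {b : ℝ} (a : ℝ) (hb : cos b - sin b ≠ 0) :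
    (cos b - sin b) / (cos (a - b) - sin (a + b)) = 1 / (cos a - sin a) := by
  rw [cos_sub_sub_sin_add, mul_comm, div_mul_eq_div_div, div_self hb]

theorem stmt4_general (θ : ℝ) (hθ : θ ≤ π / 4) :
    AntitoneOn (fun β : ℝ =>
        (Real.cos β - Real.sin β) /
          (Real.cos (θ / 2 - β) - Real.sin (θ / 2 + β)))
      (Set.Icc 0 (θ / 2)) ∧
    (∀ β ∈ Set.Icc (0 : ℝ) (θ / 2),
      (Real.cos β - Real.sin β) /
          (Real.cos (θ / 2 - β) - Real.sin (θ / 2 + β)) ≤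
        1 / (Real.cos (θ / 2) - Real.sin (θ / 2))) ∧
    (Real.cos 0 - Real.sin 0) /
        (Real.cos (θ / 2 - 0) - Real.sin (θ / 2 + 0)) =
      1 / (Real.cos (θ / 2) - Real.sin (θ / 2)) := by
  have hconst : ∀ β ∈ Set.Icc (0 : ℝ) (θ / 2),
      (cos β - sin β) / (cos (θ / 2 - β) - sin (θ / 2 + β)) =
        1 / (cos (θ / 2) - sin (θ / 2)) := fun β ⟨h₀, h₁⟩ =>
    cos_sub_sin_div_cos_sub_sub_sin_add _
      (cos_sub_sin_pos (by linarith [pi_pos]) (by linarith [pi_pos])).ne'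
  refine ⟨fun a ha b hb _ => ((hconst b hb).trans (hconst a ha).symm).le,
    fun β hβ => (hconst β hβ).le, ?_⟩
  simp

theorem stmt4 (θ : ℝ) (hθ0 : 0 < θ) (hθ : θ ≤ π / 4) :
    AntitoneOn (fun β : ℝ =>
        (Real.cos β - Real.sin β) /
          (Real.cos (θ / 2 - β) - Real.sin (θ / 2 + β)))
      (Set.Icc 0 (θ / 2)) ∧
    (∀ β ∈ Set.Icc (0 : ℝ) (θ / 2),
      (Real.cos β - Real.sin β) /
          (Real.cos (θ / 2 - β) - Real.sin (θ / 2 + β)) ≤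
        1 / (Real.cos (θ / 2) - Real.sin (θ / 2))) ∧
    (Real.cos 0 - Real.sin 0) /
        (Real.cos (θ / 2 - 0) - Real.sin (θ / 2 + 0)) =
      1 / (Real.cos (θ / 2) - Real.sin (θ / 2)) :=
  stmt4_general θ hθ
end

section
/- For all θ with 0 < θ ≤ 2π/7: (cos(θ/2) − sin(θ/4))/(cos(θ/4) − sin θ) = cos(θ/4)/(cos(θ/2) − sin(3θ/4)). -/
/-! Cross-multiplied, the identity reads
`(cos 2x - sin x)(cos 2x - sin 3x) = cos x (cos x - sin 4x)` with `x = θ/4`, and by the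
product-to-sum formulas both sides equal `(1 + cos 2x - sin 3x - sin 5x) / 2` for every real `x`. -/

open Real

lemma cos_two_mul_sub_sin_mul_cos_two_mul_sub_sin_three_mul (x : ℝ) :
    (cos (2 * x) - sin x) * (cos (2 * x) - sin (3 * x)) = cos x * (cos x - sin (4 * x)) := by
  have h4 : sin (4 * x) = 2 * sin (2 * x) * cos (2 * x) := by
    rw [show 4 * x = 2 * (2 * x) by ring, sin_two_mul]
  rw [h4, sin_three_mul, cos_two_mul, sin_two_mul]
  linear_combination (1 + 2 * sin x) * (4 * cos x ^ 2 - 1 - 2 * sin x) * sin_sq_add_cos_sq x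

lemma sin_lt_cos_of_add_lt_pi_div_two {x y : ℝ} (hx : 0 ≤ x) (hy : -(π / 2) ≤ y)
    (hxy : x + y < π / 2) : sin y < cos x := by
  rw [← cos_pi_div_two_sub]
  exact cos_lt_cos_of_nonneg_of_le_pi hx (by linarith) (by linarith)

theorem stmt6 (θ : ℝ) (hθ0 : 0 < θ) (hθ : θ ≤ 2 * π / 7) :
    (Real.cos (θ / 2) - Real.sin (θ / 4)) / (Real.cos (θ / 4) - Real.sin θ) =
      Real.cos (θ / 4) / (Real.cos (θ / 2) - Real.sin (3 * θ / 4)) := by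
  have hθ' : θ < 2 * π / 5 := hθ.trans_lt (by linarith [pi_pos])
  have h₁ : sin θ < cos (θ / 4) :=
    sin_lt_cos_of_add_lt_pi_div_two (by linarith) (by linarith) (by linarith)
  have h₂ : sin (3 * θ / 4) < cos (θ / 2) :=
    sin_lt_cos_of_add_lt_pi_div_two (by linarith) (by linarith) (by linarith)
  rw [div_eq_div_iff (sub_ne_zero.2 h₁.ne') (sub_ne_zero.2 h₂.ne')]
  have key := cos_two_mul_sub_sin_mul_cos_two_mul_sub_sin_three_mul (θ / 4)
  rw [show 2 * (θ / 4) = θ / 2 by ring, show 3 * (θ / 4) = 3 * θ / 4 by ring,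
    show 4 * (θ / 4) = θ by ring] at key
  linear_combination key
end

section
/- For all θ with 0 < θ ≤ 2π/7 and all β with 0 ≤ β ≤ θ/2: (cos(θ/4 + β) − sin β)/(cos(θ/2 − β) − sin(3θ/4 + β)) = cos(θ/4)/(cos(θ/2) − sin(3θ/4)), provided the denominators are nonzero; i.e., the function of β is constant. -/
/-! Writing `sin x = cos (π/2 - x)` and applying the sum-to-product formula, the numerator and the
denominator both factor through `sin (π/4 - θ/8 - β)`, and the remaining factors do not involve `β`. -/

open Real

lemma cos_add_sub_sin_eq_mul (θ β : ℝ) :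
    cos (θ / 4 + β) - sin β = 2 * sin (π / 4 + θ / 8) * sin (π / 4 - θ / 8 - β) := by
  rw [← cos_pi_div_two_sub, cos_sub_cos,
    show (θ / 4 + β + (π / 2 - β)) / 2 = π / 4 + θ / 8 by ring,
    show (θ / 4 + β - (π / 2 - β)) / 2 = -(π / 4 - θ / 8 - β) by ring, sin_neg]
  ring

lemma cos_sub_sub_sin_eq_mul (θ β : ℝ) :
    cos (θ / 2 - β) - sin (3 * θ / 4 + β) =
      2 * sin (π / 4 - 5 * θ / 8) * sin (π / 4 - θ / 8 - β) := by
  rw [← cos_pi_div_two_sub, cos_sub_cos,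
    show (θ / 2 - β + (π / 2 - (3 * θ / 4 + β))) / 2 = π / 4 - θ / 8 - β by ring,
    show (θ / 2 - β - (π / 2 - (3 * θ / 4 + β))) / 2 = -(π / 4 - 5 * θ / 8) by ring, sin_neg]
  ring

lemma cos_add_sub_sin_div_eq (θ β : ℝ)
    (hden : cos (θ / 2 - β) - sin (3 * θ / 4 + β) ≠ 0) :
    (cos (θ / 4 + β) - sin β) / (cos (θ / 2 - β) - sin (3 * θ / 4 + β)) =
      sin (π / 4 + θ / 8) / sin (π / 4 - 5 * θ / 8) := by
  rw [cos_sub_sub_sin_eq_mul] at hden ⊢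
  rw [cos_add_sub_sin_eq_mul, mul_div_mul_right _ _ (right_ne_zero_of_mul hden),
    mul_div_mul_left _ _ two_ne_zero]

theorem stmt7_general (θ β : ℝ)
    (hden1 : Real.cos (θ / 2 - β) - Real.sin (3 * θ / 4 + β) ≠ 0)
    (hden2 : Real.cos (θ / 2) - Real.sin (3 * θ / 4) ≠ 0) :
    (Real.cos (θ / 4 + β) - Real.sin β) /
        (Real.cos (θ / 2 - β) - Real.sin (3 * θ / 4 + β)) =
      Real.cos (θ / 4) / (Real.cos (θ / 2) - Real.sin (3 * θ / 4)) := by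
  have h0 := cos_add_sub_sin_div_eq θ 0 (by simpa using hden2)
  simp only [add_zero, sub_zero, sin_zero] at h0
  rw [cos_add_sub_sin_div_eq θ β hden1, h0]

theorem stmt7 (θ β : ℝ) (hθ0 : 0 < θ) (hθ : θ ≤ 2 * π / 7)
    (hβ0 : 0 ≤ β) (hβ : β ≤ θ / 2)
    (hden1 : Real.cos (θ / 2 - β) - Real.sin (3 * θ / 4 + β) ≠ 0)
    (hden2 : Real.cos (θ / 2) - Real.sin (3 * θ / 4) ≠ 0) :
    (Real.cos (θ / 4 + β) - Real.sin β) /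
        (Real.cos (θ / 2 - β) - Real.sin (3 * θ / 4 + β)) =
      Real.cos (θ / 4) / (Real.cos (θ / 2) - Real.sin (3 * θ / 4)) :=
  stmt7_general θ β hden1 hden2
end

section
/- For all θ with 0 < θ ≤ 2π/7: (cos(θ/2) − sin(3θ/4))/(cos(θ/4) − sin θ) ≤ cos(θ/4)/(cos(θ/2) − sin(3θ/4)). -/
/-! Put `x = θ/4` and `s = sin x`. Both denominators are positive because `5x < π/2`, so
the inequality is `(cos 2x - sin 3x)² ≤ cos x (cos x - sin 4x)`, which in terms of `s` reads
`(1 - 3s - 2s² + 4s³)² ≤ (1 - s²)(1 - 4s + 8s³)`. The difference of the two sides is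
`2s(1 - 4s)(1 + s) + 2s⁴(10 + 4s - 8s²)`, nonnegative as soon as `0 ≤ s ≤ 1/4`,
and indeed `sin (θ/4) ≤ θ/4 ≤ π/14 < 1/4`. -/

open Real

lemma sq_cubic_le_of_nonneg_of_le_quarter {s : ℝ} (h0 : 0 ≤ s) (h1 : s ≤ 1 / 4) :
    (1 - 3 * s - 2 * s ^ 2 + 4 * s ^ 3) ^ 2 ≤ (1 - s ^ 2) * (1 - 4 * s + 8 * s ^ 3) := by
  have hdiff : (1 - s ^ 2) * (1 - 4 * s + 8 * s ^ 3) - (1 - 3 * s - 2 * s ^ 2 + 4 * s ^ 3) ^ 2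
      = 2 * s * (1 - 4 * s) * (1 + s) + 2 * s ^ 4 * (10 + 4 * s - 8 * s ^ 2) := by ring
  have h4 : 0 ≤ 1 - 4 * s := by linarith
  have h10 : 0 ≤ 10 + 4 * s - 8 * s ^ 2 := by nlinarith
  have hpos : 0 ≤ 2 * s * (1 - 4 * s) * (1 + s) + 2 * s ^ 4 * (10 + 4 * s - 8 * s ^ 2) := by
    positivity
  linarith

lemma cos_two_mul_sub_sin_three_mul (x : ℝ) :
    cos (2 * x) - sin (3 * x) = 1 - 3 * sin x - 2 * sin x ^ 2 + 4 * sin x ^ 3 := by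
  rw [cos_two_mul, cos_sq', sin_three_mul]
  ring

lemma cos_mul_cos_sub_sin_four_mul (x : ℝ) :
    cos x * (cos x - sin (4 * x)) =
      (1 - sin x ^ 2) * (1 - 4 * sin x + 8 * sin x ^ 3) := by
  have h4 : sin (4 * x) = 4 * sin x * cos x * (1 - 2 * sin x ^ 2) := by
    rw [show 4 * x = 2 * (2 * x) by ring, sin_two_mul, sin_two_mul, cos_two_mul, cos_sq']
    ring
  rw [h4]
  linear_combination (1 - 4 * sin x + 8 * sin x ^ 3) * sin_sq_add_cos_sq x

lemma sin_lt_cos_of_add_lt {a b : ℝ} (ha : -(π / 2) ≤ a) (hb : 0 ≤ b)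
    (hab : a + b < π / 2) : sin a < cos b := by
  rw [← sin_pi_div_two_sub]
  exact sin_lt_sin_of_lt_of_le_pi_div_two ha (by linarith) (by linarith)

lemma div_le_div_of_sin_le_quarter {x : ℝ} (hx0 : 0 ≤ x) (hx : x < π / 10)
    (hs : sin x ≤ 1 / 4) :
    (cos (2 * x) - sin (3 * x)) / (cos x - sin (4 * x)) ≤
      cos x / (cos (2 * x) - sin (3 * x)) := by
  have hB : 0 < cos x - sin (4 * x) :=
    sub_pos.2 (sin_lt_cos_of_add_lt (by linarith) hx0 (by linarith))
  have hA : 0 < cos (2 * x) - sin (3 * x) :=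
    sub_pos.2 (sin_lt_cos_of_add_lt (by linarith) (by linarith) (by linarith))
  have hs0 : 0 ≤ sin x := sin_nonneg_of_nonneg_of_le_pi hx0 (by linarith [pi_pos])
  rw [div_le_div_iff₀ hB hA, ← sq, cos_mul_cos_sub_sin_four_mul, cos_two_mul_sub_sin_three_mul]
  exact sq_cubic_le_of_nonneg_of_le_quarter hs0 hs

theorem stmt8 (θ : ℝ) (hθ0 : 0 < θ) (hθ : θ ≤ 2 * π / 7) :
    (Real.cos (θ / 2) - Real.sin (3 * θ / 4)) / (Real.cos (θ / 4) - Real.sin θ) ≤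
      Real.cos (θ / 4) / (Real.cos (θ / 2) - Real.sin (3 * θ / 4)) := by
  set x := θ / 4 with hx
  have hθx : θ = 4 * x := by rw [hx]; ring
  rw [show θ / 2 = 2 * x by rw [hx]; ring, show 3 * θ / 4 = 3 * x by rw [hx]; ring, hθx]
  have hπ : π < 3.15 := pi_lt_d2
  have hx0 : 0 ≤ x := by positivity
  have hsin : sin x ≤ 1 / 4 := by linarith [sin_le hx0]
  exact div_le_div_of_sin_le_quarter hx0 (by linarith) hsin
end

section
/- For all θ with 0 < θ ≤ 2π/7, the function h(β) = (cos(5θ/4 − β) − sin β)/(cos(θ/2 − β) − sin(5θ/4 − β)) is decreasing in β for 3θ/4 ≤ β ≤ 5θ/4, and hence is maximized at β = 3θ/4. -/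
/-! Writing `sin x = cos (π/2 - x)` and applying product-to-sum,
`cos (c - x) - sin x = 2 sin (π/4 - c/2) cos (x + π/4 - c/2)`. The numerator of `h` is this
expression with `c = 5θ/4` at `x = β`, and the denominator is the same expression with
`c = 3θ/4` at `x = 5θ/4 - β`. For `-3π/2 < c < π/2` the expression is a positive multiple of a
cosine, so on the given range the numerator is nonnegative and nonincreasing while the
denominator is positive and nondecreasing, whence their quotient is nonincreasing. -/

open Real Set

theorem AntitoneOn.div_of_monotoneOn {α β : Type*} [Preorder α] [Field β] [LinearOrder β]
    [IsStrictOrderedRing β] {f g : α → β} {s : Set α}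
    (hf : AntitoneOn f s) (hg : MonotoneOn g s)
    (hf₀ : ∀ x ∈ s, 0 ≤ f x) (hg₀ : ∀ x ∈ s, 0 < g x) :
    AntitoneOn (fun x => f x / g x) s :=
  fun _ hx _ hy hxy => div_le_div₀ (hf₀ _ hx) (hf hx hy hxy) (hg₀ _ hx) (hg hx hy hxy)

namespace Real

theorem cos_sub_sub_sin_eq_mul_cos (c x : ℝ) :
    cos (c - x) - sin x = 2 * sin (π / 4 - c / 2) * cos (x + π / 4 - c / 2) := by
  rw [two_mul_sin_mul_cos, show π / 4 - c / 2 + (x + π / 4 - c / 2) = π / 2 - (c - x) by ring,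
    sin_pi_div_two_sub, show π / 4 - c / 2 - (x + π / 4 - c / 2) = -x by ring, sin_neg]
  ring

theorem antitoneOn_cos_sub_sub_sin {c : ℝ} (hc : c ∈ Icc (-(3 * π / 2)) (π / 2)) :
    AntitoneOn (fun x => cos (c - x) - sin x) (Icc (c / 2 - π / 4) (c / 2 + 3 * π / 4)) := by
  intro x hx y hy hxy
  simp only [cos_sub_sub_sin_eq_mul_cos]
  have hcoef : 0 ≤ 2 * sin (π / 4 - c / 2) :=
    mul_nonneg zero_le_two (sin_nonneg_of_nonneg_of_le_pi (by linarith [hc.2]) (by linarith [hc.1]))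
  exact mul_le_mul_of_nonneg_left
    (cos_le_cos_of_nonneg_of_le_pi (by linarith [hx.1]) (by linarith [hy.2]) (by linarith)) hcoef

theorem cos_sub_sub_sin_nonneg {c x : ℝ} (hc : c ∈ Icc (-(3 * π / 2)) (π / 2))
    (hx : x ∈ Icc (c / 2 - 3 * π / 4) (c / 2 + π / 4)) : 0 ≤ cos (c - x) - sin x := by
  rw [cos_sub_sub_sin_eq_mul_cos]
  have hcoef : 0 ≤ sin (π / 4 - c / 2) :=
    sin_nonneg_of_nonneg_of_le_pi (by linarith [hc.2]) (by linarith [hc.1])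
  have hcos : 0 ≤ cos (x + π / 4 - c / 2) :=
    cos_nonneg_of_mem_Icc ⟨by linarith [hx.1], by linarith [hx.2]⟩
  positivity

theorem cos_sub_sub_sin_pos {c x : ℝ} (hc : c ∈ Ioo (-(3 * π / 2)) (π / 2))
    (hx : x ∈ Ioo (c / 2 - 3 * π / 4) (c / 2 + π / 4)) : 0 < cos (c - x) - sin x := by
  rw [cos_sub_sub_sin_eq_mul_cos]
  have hcoef : 0 < sin (π / 4 - c / 2) :=
    sin_pos_of_pos_of_lt_pi (by linarith [hc.2]) (by linarith [hc.1])
  have hcos : 0 < cos (x + π / 4 - c / 2) :=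
    cos_pos_of_mem_Ioo ⟨by linarith [hx.1], by linarith [hx.2]⟩
  positivity

end Real

theorem stmt9 (θ : ℝ) (hθ0 : 0 < θ) (hθ : θ ≤ 2 * π / 7) :
    AntitoneOn (fun β : ℝ =>
        (Real.cos (5 * θ / 4 - β) - Real.sin β) /
          (Real.cos (θ / 2 - β) - Real.sin (5 * θ / 4 - β)))
      (Set.Icc (3 * θ / 4) (5 * θ / 4)) ∧
    (∀ β ∈ Set.Icc (3 * θ / 4) (5 * θ / 4),
      (Real.cos (5 * θ / 4 - β) - Real.sin β) /
          (Real.cos (θ / 2 - β) - Real.sin (5 * θ / 4 - β)) ≤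
        (Real.cos (5 * θ / 4 - 3 * θ / 4) - Real.sin (3 * θ / 4)) /
          (Real.cos (θ / 2 - 3 * θ / 4) - Real.sin (5 * θ / 4 - 3 * θ / 4))) := by
  have hπ := pi_pos
  have hden (β : ℝ) : cos (θ / 2 - β) - sin (5 * θ / 4 - β) =
      cos (3 * θ / 4 - (5 * θ / 4 - β)) - sin (5 * θ / 4 - β) := by
    rw [← cos_neg (3 * θ / 4 - _)]
    ring_nf
  have hnum_anti :
      AntitoneOn (fun β => cos (5 * θ / 4 - β) - sin β) (Icc (3 * θ / 4) (5 * θ / 4)) :=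
    (antitoneOn_cos_sub_sub_sin ⟨by linarith, by linarith⟩).mono
      (Icc_subset_Icc (by linarith) (by linarith))
  have hden_mono : MonotoneOn (fun β => cos (θ / 2 - β) - sin (5 * θ / 4 - β))
      (Icc (3 * θ / 4) (5 * θ / 4)) := by
    rintro x ⟨hx₁, hx₂⟩ y ⟨hy₁, hy₂⟩ hxy
    simp only [hden]
    exact antitoneOn_cos_sub_sub_sin (c := 3 * θ / 4) ⟨by linarith, by linarith⟩
      ⟨by linarith, by linarith⟩ ⟨by linarith, by linarith⟩ (by linarith)
  have hanti := hnum_anti.div_of_monotoneOn hden_mono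
    (fun β ⟨hβ₁, hβ₂⟩ =>
      cos_sub_sub_sin_nonneg ⟨by linarith, by linarith⟩ ⟨by linarith, by linarith⟩)
    (fun β ⟨hβ₁, hβ₂⟩ =>
      hden β ▸ cos_sub_sub_sin_pos ⟨by linarith, by linarith⟩ ⟨by linarith, by linarith⟩)
  exact ⟨hanti, fun β hβ => hanti (left_mem_Icc.2 (by linarith)) hβ hβ.1⟩
end

section
/- For all θ with 0 < θ ≤ π/3 and all α with 0 ≤ α ≤ θ/2: ((1 + sin(θ/2))/cos(θ/2))·cos α + sin α ≤ 1 + 2·sin(θ/2). -/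
open Real

theorem stmt17 (θ α : ℝ) (hθ0 : 0 < θ) (hθ : θ ≤ π / 3)
    (hα0 : 0 ≤ α) (hα : α ≤ θ / 2) :
    ((1 + Real.sin (θ / 2)) / Real.cos (θ / 2)) * Real.cos α + Real.sin α ≤
      1 + 2 * Real.sin (θ / 2) := by
  have hπ : (3:ℝ) < π := Real.pi_gt_three
  set β := θ / 2 with hβdef
  have hβ0 : 0 < β := by simp [hβdef]; linarith
  have hβ6 : β ≤ π / 6 := by simp [hβdef]; linarith
  have hc : 0 < Real.cos β :=
    Real.cos_pos_of_mem_Ioo ⟨by linarith, by linarith⟩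
  have key : Real.sin ((α + β) / 2) ≤ Real.cos ((3 * β + α) / 2) := by
    rw [← Real.cos_pi_div_two_sub]
    apply Real.cos_le_cos_of_nonneg_of_le_pi
    · positivity
    · linarith
    · linarith
  have hs : 0 ≤ Real.sin ((β - α) / 2) :=
    Real.sin_nonneg_of_nonneg_of_le_pi (by linarith) (by linarith)
  have e1 : Real.cos α - Real.cos β =
      2 * Real.sin ((α + β) / 2) * Real.sin ((β - α) / 2) := by
    rw [Real.cos_sub_cos, show (α - β) / 2 = -((β - α) / 2) by ring, Real.sin_neg]
    ring
  have e2 : Real.sin (2 * β) - Real.sin (β + α) =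
      2 * Real.sin ((β - α) / 2) * Real.cos ((3 * β + α) / 2) := by
    rw [Real.sin_sub_sin, show (2 * β - (β + α)) / 2 = (β - α) / 2 by ring,
      show (2 * β + (β + α)) / 2 = (3 * β + α) / 2 by ring]
  have h2 : Real.cos α + Real.sin (β + α) ≤ Real.cos β + Real.sin (2 * β) := by
    nlinarith [mul_le_mul_of_nonneg_right key hs]
  have hsin : Real.sin (β + α) = Real.sin β * Real.cos α + Real.cos β * Real.sin α :=
    Real.sin_add β α
  have hsin2 : Real.sin (2 * β) = 2 * Real.sin β * Real.cos β := Real.sin_two_mul β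
  rw [div_mul_eq_mul_div, div_add' _ _ _ hc.ne', div_le_iff₀ hc]
  nlinarith [h2]
end
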